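/- arXiv:2305.03384 — 3 statements merged into one kernel-verified Lean document; each statement's English description precedes it below -/
import Mathlib

section
/- For each integer k with 1 ≤ k ≤ 6 and each α ∈ (0,1) there exist an angle θ₀ ∈ (π/2, π) and a constant c > 0 such that for every θ ∈ (π/2, θ₀), every τ > 0 and every z ∈ ℂ with z ≠ 0, |arg z| ≤ θ and |z|·τ ≤ π/sin θ, one has |δ_{τ,k}(e^{−zτ}) − z| ≤ c·τ^k·|z|^{k+1} and |δ_{τ,k}(e^{−zτ})^α − z^α| ≤ c·τ^k·|z|^{k+α}, where the fractional powers are taken with the principal branch. -/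
open Complex Real

/-- The BDFk generating polynomial `δ_{τ,k}(ξ) = (1/τ)·Σ_{j=1}^{k} (1−ξ)^j / j`. -/
noncomputable def bdfDelta (τ : ℝ) (k : ℕ) (ξ : ℂ) : ℂ :=
  (1 / (τ : ℂ)) * ∑ j ∈ Finset.Icc 1 k, (1 - ξ) ^ j / (j : ℂ)

/-!
With `w = zτ` we have `τ δ_{τ,k}(e^{-w}) = Σ_{j ≤ k} u^j / j` for `u = 1 - e^{-w}`: the
degree-`k` Taylor polynomial of `-log(1 - u) = w`. So `τ δ_{τ,k}(e^{-w}) - w = O(|w|^{k+1})` for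
small `w`, and by compactness on the whole disc `|w| ≤ 2π`, which contains every admissible `w`
once `sin θ > 1/2`. This is the first estimate; it says `δ = z + e` with `|e| ≤ ε|z|` and
`ε = C (τ|z|)^k` bounded. For `|arg z| < 5π/6` the disc `|ζ - z| ≤ |z|/2` avoids the branch cut
and `|d ζ^α / dζ| ≤ 2|z|^{α-1}` on it, so the mean value theorem gives the second estimate when
`ε ≤ 1/2`, and for `ε > 1/2` the crude bound `|δ^α| + |z^α| = O(|z|^α)` suffices.
-/

open Metric Set

lemma bdfDelta_one_eq_neg_logTaylor (k : ℕ) (ξ : ℂ) :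
    bdfDelta 1 k ξ = -logTaylor (k + 1) (ξ - 1) := by
  simp only [bdfDelta, logTaylor, Finset.range_eq_Ico,
    Finset.sum_eq_sum_Ico_succ_bot (Nat.succ_pos k), ← Finset.Ico_add_one_right_eq_Icc]
  simp only [ofReal_one, div_one, one_mul, CharP.cast_eq_zero, div_zero, zero_add,
    ← Finset.sum_neg_distrib]
  refine Finset.sum_congr rfl fun j _ => ?_
  rw [pow_succ, mul_neg_one, neg_mul, ← mul_pow, neg_one_mul, neg_sub, neg_div, neg_neg]

lemma norm_bdfDelta_one_exp_neg_sub_le {k : ℕ} {w : ℂ} (hw : ‖w‖ ≤ 1 / 4) :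
    ‖bdfDelta 1 k (exp (-w)) - w‖ ≤ 2 ^ (k + 2) * ‖w‖ ^ (k + 1) := by
  set u := exp (-w) - 1
  have hu : ‖u‖ ≤ 2 * ‖w‖ := by
    simpa using norm_exp_sub_one_le (x := -w) (by rw [norm_neg]; linarith)
  have hlog : Complex.log (1 + u) = -w := by
    have him : |w.im| ≤ 1 / 4 := (abs_im_le_norm w).trans hw
    rw [add_sub_cancel, Complex.log_exp] <;> simp <;> linarith [abs_le.mp him, pi_gt_three]
  have key := norm_log_sub_logTaylor_le k (z := u) (by linarith)
  rw [hlog] at key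
  rw [bdfDelta_one_eq_neg_logTaylor,
    show -logTaylor (k + 1) u - w = -w - logTaylor (k + 1) u by ring]
  calc _ ≤ ‖u‖ ^ (k + 1) * (1 - ‖u‖)⁻¹ / (k + 1) := key
    _ ≤ (2 * ‖w‖) ^ (k + 1) * 2 / 1 := by
        have h1u : 0 < 1 - ‖u‖ := by linarith
        gcongr
        · rw [inv_le_comm₀ h1u two_pos]; linarith
        · linarith
    _ = 2 ^ (k + 2) * ‖w‖ ^ (k + 1) := by ring

theorem exists_norm_bdfDelta_one_exp_neg_sub_le (k : ℕ) (R : ℝ) :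
    ∃ C > 0, ∀ w : ℂ, ‖w‖ ≤ R → ‖bdfDelta 1 k (exp (-w)) - w‖ ≤ C * ‖w‖ ^ (k + 1) := by
  obtain ⟨M, hM⟩ := (isCompact_closedBall (0 : ℂ) R).exists_bound_of_continuousOn
    (f := fun w => bdfDelta 1 k (exp (-w)) - w) (by unfold bdfDelta; fun_prop)
  refine ⟨2 ^ (k + 2) + max M 0 * 4 ^ (k + 1), by positivity, fun w hwR => ?_⟩
  rcases le_or_gt ‖w‖ (1 / 4) with hw | hw
  · calc _ ≤ 2 ^ (k + 2) * ‖w‖ ^ (k + 1) := norm_bdfDelta_one_exp_neg_sub_le hw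
      _ ≤ _ := by gcongr; exact le_add_of_nonneg_right (by positivity)
  · have h1 : 1 ≤ (4 * ‖w‖) ^ (k + 1) := one_le_pow₀ (by linarith)
    calc _ ≤ max M 0 := (hM w (by simpa using hwR)).trans (le_max_left _ _)
      _ ≤ max M 0 * (4 * ‖w‖) ^ (k + 1) := le_mul_of_one_le_right (le_max_right _ _) h1
      _ ≤ _ := by rw [mul_pow, ← mul_assoc]; gcongr; exact le_add_of_nonneg_left (by positivity)

lemma bdfDelta_eq_inv_mul (τ : ℝ) (k : ℕ) (ξ : ℂ) :
    bdfDelta τ k ξ = (τ : ℂ)⁻¹ * bdfDelta 1 k ξ := by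
  simp [bdfDelta]

theorem exists_norm_bdfDelta_exp_sub_le (k : ℕ) (R : ℝ) :
    ∃ C > 0, ∀ τ : ℝ, 0 < τ → ∀ z : ℂ, ‖z‖ * τ ≤ R →
      ‖bdfDelta τ k (exp (-z * τ)) - z‖ ≤ C * τ ^ k * ‖z‖ ^ (k + 1) := by
  obtain ⟨C, hC, hbound⟩ := exists_norm_bdfDelta_one_exp_neg_sub_le k R
  refine ⟨C, hC, fun τ hτ z hzR => ?_⟩
  have hτ' : (τ : ℂ) ≠ 0 := ofReal_ne_zero.mpr hτ.ne'
  have hnorm : ‖z * τ‖ = ‖z‖ * τ := by rw [norm_mul, norm_real, norm_of_nonneg hτ.le]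
  have hscale : bdfDelta τ k (exp (-z * τ)) - z =
      (τ : ℂ)⁻¹ * (bdfDelta 1 k (exp (-(z * τ))) - z * τ) := by
    rw [bdfDelta_eq_inv_mul, neg_mul]; field_simp
  calc _ = τ⁻¹ * ‖bdfDelta 1 k (exp (-(z * τ))) - z * τ‖ := by
        rw [hscale, norm_mul, norm_inv, norm_real, norm_of_nonneg hτ.le]
    _ ≤ τ⁻¹ * (C * (‖z‖ * τ) ^ (k + 1)) := by
        gcongr; exact hnorm ▸ hbound _ (hnorm ▸ hzR)
    _ = C * τ ^ k * ‖z‖ ^ (k + 1) := by field_simp; ring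

lemma one_half_lt_sin {x : ℝ} (h₁ : π / 6 < x) (h₂ : x < 5 * π / 6) : 1 / 2 < Real.sin x := by
  rw [← sin_pi_div_six]
  rcases le_or_gt x (π / 2) with hx | hx
  · exact sin_lt_sin_of_lt_of_le_pi_div_two (by linarith [pi_pos]) hx h₁
  · rw [← Real.sin_pi_sub x]
    exact sin_lt_sin_of_lt_of_le_pi_div_two (by linarith [pi_pos]) (by linarith) (by linarith)

lemma closedBall_half_norm_subset_slitPlane {z : ℂ} (hz : z ≠ 0) (harg : |z.arg| < 5 * π / 6) :
    closedBall z (‖z‖ / 2) ⊆ slitPlane := by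
  intro ζ hζ
  rw [mem_closedBall, dist_eq_norm] at hζ
  have hz0 : 0 < ‖z‖ := norm_pos_iff.mpr hz
  by_contra hζs
  obtain ⟨hre, him⟩ : ζ.re ≤ 0 ∧ ζ.im = 0 := by simpa [mem_slitPlane_iff] using hζs
  rcases le_or_gt 0 z.re with hzr | hzr
  · have : ‖z‖ ^ 2 ≤ ‖ζ - z‖ ^ 2 := by
      simp only [Complex.sq_norm, normSq_apply, sub_re, sub_im, him]
      nlinarith
    nlinarith [norm_nonneg (ζ - z)]
  · have hsin : 1 / 2 < Real.sin |z.arg| :=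
      one_half_lt_sin (by linarith [abs_arg_le_pi_div_two_iff.not.mpr hzr.not_ge]) harg
    have hzim : ‖z‖ * Real.sin |z.arg| = |z.im| := by
      rw [← abs_sin_eq_sin_abs_of_abs_le_pi (abs_arg_le_pi z), sin_arg, abs_div,
        abs_of_pos hz0]
      field_simp
    have : |z.im| ≤ ‖ζ - z‖ := by simpa [him] using abs_im_le_norm (ζ - z)
    nlinarith

lemma ne_zero_of_closedBall_subset_slitPlane {z : ℂ} {r : ℝ} (hr : 0 ≤ r)
    (h : closedBall z r ⊆ slitPlane) : z ≠ 0 :=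
  slitPlane_ne_zero (h (mem_closedBall_self hr))

lemma norm_cpow_sub_cpow_le {α : ℝ} (hα : α ∈ Icc (0 : ℝ) 1) {z ζ : ℂ}
    (hball : closedBall z (‖z‖ / 2) ⊆ slitPlane) (hζ : ζ ∈ closedBall z (‖z‖ / 2)) :
    ‖ζ ^ (α : ℂ) - z ^ (α : ℂ)‖ ≤ 2 * ‖z‖ ^ (α - 1) * ‖ζ - z‖ := by
  have hz0 : 0 < ‖z‖ :=
    norm_pos_iff.mpr (ne_zero_of_closedBall_subset_slitPlane (by positivity) hball)
  have hlower : ∀ x ∈ closedBall z (‖z‖ / 2), ‖z‖ / 2 ≤ ‖x‖ := fun x hx => by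
    rw [mem_closedBall, dist_eq_norm] at hx
    linarith [norm_sub_norm_le z x, norm_sub_rev z x]
  refine (convex_closedBall z _).norm_image_sub_le_of_norm_hasDerivWithin_le
    (fun x hx => (hasStrictDerivAt_cpow_const (hball hx)).hasDerivAt.hasDerivWithinAt)
    (fun x hx => ?_) (mem_closedBall_self (by positivity)) hζ
  have hx0 : 0 < ‖x‖ := by linarith [hlower x hx]
  have hpow : ‖x‖ ^ (α - 1) ≤ 2 * ‖z‖ ^ (α - 1) := calc
    ‖x‖ ^ (α - 1) ≤ (‖z‖ / 2) ^ (α - 1) :=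
        rpow_le_rpow_of_nonpos (by positivity) (hlower x hx) (by linarith [hα.2])
    _ = 2 ^ (1 - α) * ‖z‖ ^ (α - 1) := by
        rw [div_rpow hz0.le two_pos.le, div_eq_mul_inv, ← rpow_neg two_pos.le, neg_sub,
          mul_comm]
    _ ≤ 2 ^ (1 : ℝ) * ‖z‖ ^ (α - 1) := by
        gcongr
        · norm_num
        · linarith [hα.1]
    _ = 2 * ‖z‖ ^ (α - 1) := by rw [rpow_one]
  calc ‖(α : ℂ) * x ^ ((α : ℂ) - 1)‖ = α * ‖x‖ ^ (α - 1) := by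
        rw [norm_mul, norm_real, norm_of_nonneg hα.1, ← ofReal_one, ← ofReal_sub,
          norm_cpow_real]
    _ ≤ 1 * (2 * ‖z‖ ^ (α - 1)) := by gcongr; exact hα.2
    _ = _ := one_mul _

lemma norm_cpow_sub_cpow_le_of_norm_sub_le {α : ℝ} (hα : α ∈ Icc (0 : ℝ) 1) {z δ : ℂ}
    {ε E : ℝ} (hball : closedBall z (‖z‖ / 2) ⊆ slitPlane) (hδ : ‖δ - z‖ ≤ ε * ‖z‖)
    (hε : ε ≤ E) :
    ‖δ ^ (α : ℂ) - z ^ (α : ℂ)‖ ≤ 2 * (2 + E) * ε * ‖z‖ ^ α := by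
  have hz0 : 0 < ‖z‖ :=
    norm_pos_iff.mpr (ne_zero_of_closedBall_subset_slitPlane (by positivity) hball)
  have hε0 : 0 ≤ ε := nonneg_of_mul_nonneg_left ((norm_nonneg _).trans hδ) hz0
  have hzα : 0 ≤ ‖z‖ ^ α := by positivity
  rcases le_or_gt ε (1 / 2) with hsmall | hlarge
  · have hδball : δ ∈ closedBall z (‖z‖ / 2) := by
      rw [mem_closedBall, dist_eq_norm]; nlinarith
    calc _ ≤ 2 * ‖z‖ ^ (α - 1) * ‖δ - z‖ := norm_cpow_sub_cpow_le hα hball hδball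
      _ ≤ 2 * ‖z‖ ^ (α - 1) * (ε * ‖z‖) := by gcongr
      _ = 2 * ε * ‖z‖ ^ α := by rw [rpow_sub_one hz0.ne']; field_simp
      _ ≤ 2 * (2 + E) * ε * ‖z‖ ^ α := by gcongr; linarith
  · have hδnorm : ‖δ‖ ≤ (1 + E) * ‖z‖ := by
      linarith [norm_le_norm_add_norm_sub' δ z, mul_le_mul_of_nonneg_right hε hz0.le]
    have hδα : ‖δ ^ (α : ℂ)‖ ≤ (1 + E) * ‖z‖ ^ α := calc
      ‖δ ^ (α : ℂ)‖ = ‖δ‖ ^ α := norm_cpow_real δ α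
      _ ≤ ((1 + E) * ‖z‖) ^ α := by gcongr; exact hα.1
      _ = (1 + E) ^ α * ‖z‖ ^ α := mul_rpow (by linarith) hz0.le
      _ ≤ (1 + E) * ‖z‖ ^ α := by
          gcongr; exact rpow_le_self_of_one_le (by linarith) hα.2
    calc _ ≤ ‖δ ^ (α : ℂ)‖ + ‖z ^ (α : ℂ)‖ := norm_sub_le _ _
      _ ≤ (2 + E) * ‖z‖ ^ α := by linarith [norm_cpow_real z α]
      _ ≤ 2 * (2 + E) * ε * ‖z‖ ^ α := by
          have : 0 ≤ (2 * ε - 1) * ((2 + E) * ‖z‖ ^ α) :=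
            mul_nonneg (by linarith) (mul_nonneg (by linarith) hzα)
          linarith

theorem stmt1_general (k : ℕ) (α : ℝ) (hα : α ∈ Set.Ioo (0 : ℝ) 1) :
    ∃ θ₀ ∈ Set.Ioo (π / 2) π, ∃ c > (0 : ℝ),
      ∀ θ ∈ Set.Ioo (π / 2) θ₀, ∀ τ : ℝ, 0 < τ → ∀ z : ℂ, z ≠ 0 →
        |z.arg| ≤ θ → ‖z‖ * τ ≤ π / Real.sin θ →
          ‖bdfDelta τ k (Complex.exp (-z * τ)) - z‖ ≤
              c * τ ^ k * ‖z‖ ^ (k + 1) ∧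
          ‖bdfDelta τ k (Complex.exp (-z * τ)) ^ (α : ℂ) - z ^ (α : ℂ)‖ ≤
              c * τ ^ k * ‖z‖ ^ ((k : ℝ) + α) := by
  obtain ⟨C, hC, hbound⟩ := exists_norm_bdfDelta_exp_sub_le k (2 * π)
  refine ⟨5 * π / 6, ⟨by linarith [pi_pos], by linarith [pi_pos]⟩,
    2 * (2 + C * (2 * π) ^ k) * C, by positivity, ?_⟩
  rintro θ ⟨hθ₁, hθ₂⟩ τ hτ z hz harg hzτ
  have hsin : 1 / 2 < Real.sin θ := one_half_lt_sin (by linarith [pi_pos]) hθ₂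
  have hzτ' : ‖z‖ * τ ≤ 2 * π :=
    hzτ.trans (by rw [div_le_iff₀ (by linarith)]; nlinarith [pi_pos])
  have hδ := hbound τ hτ z hzτ'
  have hE : 0 ≤ C * (2 * π) ^ k := by positivity
  refine ⟨hδ.trans (by gcongr; exact le_mul_of_one_le_left hC.le (by linarith)), ?_⟩
  have hball := closedBall_half_norm_subset_slitPlane hz (harg.trans_lt hθ₂)
  have hδ' : ‖bdfDelta τ k (exp (-z * τ)) - z‖ ≤ C * (τ * ‖z‖) ^ k * ‖z‖ :=
    hδ.trans_eq (by ring)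
  have hε : C * (τ * ‖z‖) ^ k ≤ C * (2 * π) ^ k :=
    mul_le_mul_of_nonneg_left (pow_le_pow_left₀ (by positivity) (by linarith) k) hC.le
  calc _ ≤ 2 * (2 + C * (2 * π) ^ k) * (C * (τ * ‖z‖) ^ k) * ‖z‖ ^ α :=
        norm_cpow_sub_cpow_le_of_norm_sub_le (Ioo_subset_Icc_self hα) hball hδ' hε
    _ = _ := by
        rw [rpow_add (norm_pos_iff.mpr hz), rpow_natCast]; ring

theorem stmt1 (k : ℕ) (hk1 : 1 ≤ k) (hk6 : k ≤ 6) (α : ℝ) (hα : α ∈ Set.Ioo (0 : ℝ) 1) :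
    ∃ θ₀ ∈ Set.Ioo (π / 2) π, ∃ c > (0 : ℝ),
      ∀ θ ∈ Set.Ioo (π / 2) θ₀, ∀ τ : ℝ, 0 < τ → ∀ z : ℂ, z ≠ 0 →
        |z.arg| ≤ θ → ‖z‖ * τ ≤ π / Real.sin θ →
          ‖bdfDelta τ k (Complex.exp (-z * τ)) - z‖ ≤
              c * τ ^ k * ‖z‖ ^ (k + 1) ∧
          ‖bdfDelta τ k (Complex.exp (-z * τ)) ^ (α : ℂ) - z ^ (α : ℂ)‖ ≤
              c * τ ^ k * ‖z‖ ^ ((k : ℝ) + α) :=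
  stmt1_general k α hα
end

section
/- For all integers l ≥ 1 and i ≥ 0 with 2i ≤ l, the following identity of rational numbers holds: (1/((2i)!·l!))·Σ_{j=1}^{l} a_{l,j}·((l+1)/2 − j)^{2i} = (1/(2i+l+1)!)·Σ_{j=0}^{l+1} (−1)^j·binom(l+1, j)·((l+1)/2 − j)^{2i+l+1}. (The left-hand side is the coefficient c_{2i} in the expansion of (1/l!)·Σ_{j=1}^{l} a_{l,j}·e^{((l+1)/2−j)η} in powers of η, and the right-hand side is the coefficient d_{2i} in the expansion of ((e^{η/2}−e^{−η/2})/η)^{l+1}.) -/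
/-!
With `t = e^{-X}` in `ℚ⟦X⟧`, the series `F_l = ∑ₘ a_{l,m} tᵐ` satisfies
`F_{l+1} = (l+1) t F_l - (1 - t) F_l'`; this is the recurrence defining `a_{l,j}`, read on
the Eulerian polynomials. Writing `1 - t = X u`, the series `G_l = l! u^{l+1}` satisfies the same
recurrence, and the recurrence sends a multiple of `X^{l+1}` to a multiple of `X^{l+2}`. Since
`F_0 = 1 ≡ u = G_0 mod X`, induction gives `F_l ≡ G_l mod X^{l+1}`. Multiplying by `e^{yX}` and
comparing coefficients of `Xⁿ` for `n ≤ l` yields the identity for every centre `y`, here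
`y = (l+1)/2`.
-/

/-- The coefficients `a_{l,j}`: `a_{0,0} = 1`, `a_{0,j} = 0` for `j ≥ 1`, and for `l ≥ 1`:
`a_{l,0} = a_{l,l+1} = 0` and `a_{l,j} = j·a_{l−1,j} + (l+1−j)·a_{l−1,j−1}` for `1 ≤ j ≤ l`
(extended by zero outside the range `0 ≤ j ≤ l+1`). -/
def aCoef : ℕ → ℕ → ℕ
  | 0, j => if j = 0 then 1 else 0
  | l + 1, j => if j = 0 then 0 else j * aCoef l j + (l + 2 - j) * aCoef l (j - 1)

open Finset

theorem aCoef_eq_zero_of_lt {l m : ℕ} (h : l < m) : aCoef l m = 0 := by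
  induction l generalizing m with
  | zero => simp [aCoef]; omega
  | succ l ih => simp [aCoef, ih (show l < m by omega), ih (show l < m - 1 by omega)]

theorem aCoef_succ_succ (l k : ℕ) :
    (aCoef (l + 1) (k + 1) : ℚ) = (k + 1) * aCoef l (k + 1) + (l + 1 - k) * aCoef l k := by
  rcases le_or_gt k (l + 1) with hk | hk
  · simp [aCoef, Nat.cast_sub (show k ≤ l + 1 from hk)]
  · simp [aCoef, aCoef_eq_zero_of_lt (show l < k by omega)]

section EulerianPolynomial

open Polynomial

noncomputable def eulerianPoly (l : ℕ) : ℚ[X] :=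
  ∑ m ∈ range (l + 1), C (aCoef l m : ℚ) * X ^ m

theorem coeff_eulerianPoly (l m : ℕ) : (eulerianPoly l).coeff m = aCoef l m := by
  simp only [eulerianPoly, finsetSum_coeff, coeff_C_mul_X_pow, sum_ite_eq, mem_range]
  split_ifs with hm
  · rfl
  · rw [aCoef_eq_zero_of_lt (by omega), Nat.cast_zero]

theorem coeff_X_mul_derivative {R : Type*} [Semiring R] (p : R[X]) (k : ℕ) :
    (X * derivative p).coeff k = k * p.coeff k := by
  cases k with
  | zero => simp
  | succ k => simpa [coeff_derivative] using (Nat.cast_comm (k + 1) (p.coeff (k + 1))).symm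

theorem eulerianPoly_succ (l : ℕ) :
    eulerianPoly (l + 1) = C ((l : ℚ) + 1) * X * eulerianPoly l
      + X * (1 - X) * derivative (eulerianPoly l) := by
  ext k
  cases k with
  | zero => simp [coeff_eulerianPoly, aCoef]
  | succ k =>
    have h : C ((l : ℚ) + 1) * X * eulerianPoly l + X * (1 - X) * derivative (eulerianPoly l)
        = X * (C ((l : ℚ) + 1) * eulerianPoly l + derivative (eulerianPoly l)
          - X * derivative (eulerianPoly l)) := by ring
    rw [h, coeff_X_mul, coeff_sub, coeff_add, coeff_X_mul_derivative, coeff_C_mul,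
      coeff_derivative, coeff_eulerianPoly, coeff_eulerianPoly, coeff_eulerianPoly,
      aCoef_succ_succ]
    ring

end EulerianPolynomial

section PowerSeries

open PowerSeries

theorem derivative_rescale_exp {A : Type*} [CommRing A] [Algebra ℚ A] (a : A) :
    d⁄dX A (rescale a (exp A)) = C a * rescale a (exp A) := by
  ext n
  simp only [coeff_derivative, coeff_rescale, coeff_exp, coeff_C_mul, Nat.factorial_succ]
  have h : (1 / ((n + 1) * n.factorial : ℕ) : ℚ) * (n + 1) = 1 / n.factorial := by
    push_cast
    field_simp
  rw [show ((n : A) + 1) = algebraMap ℚ A ((n : ℚ) + 1) by simp, mul_assoc, ← map_mul, h]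
  ring

theorem rescale_exp_mul_pow {A : Type*} [CommRing A] [Algebra ℚ A] (a b : A) (m : ℕ) :
    rescale a (exp A) * rescale b (exp A) ^ m = rescale (a + m * b) (exp A) := by
  rw [← map_pow, exp_pow_eq_rescale_exp, rescale_rescale, exp_mul_exp_eq_exp_add]

theorem coeff_rescale_exp (a : ℚ) (n : ℕ) :
    coeff n (rescale a (exp ℚ)) = a ^ n / n.factorial := by
  simp [coeff_rescale, coeff_exp, div_eq_mul_inv]

theorem constantCoeff_rescale_exp (a : ℚ) : constantCoeff (rescale a (exp ℚ)) = 1 := by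
  rw [← coeff_zero_eq_constantCoeff_apply, coeff_rescale_exp]
  simp

noncomputable def eulerianSeries (l : ℕ) : ℚ⟦X⟧ :=
  Polynomial.aeval (rescale (-1) (exp ℚ)) (eulerianPoly l)

theorem eulerianSeries_zero : eulerianSeries 0 = 1 := by
  simp [eulerianSeries, eulerianPoly, aCoef]

theorem eulerianSeries_succ (l : ℕ) :
    eulerianSeries (l + 1) = ((l : ℚ⟦X⟧) + 1) * rescale (-1) (exp ℚ) * eulerianSeries l
      - (1 - rescale (-1) (exp ℚ)) * d⁄dX ℚ (eulerianSeries l) := by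
  simp only [eulerianSeries, eulerianPoly_succ, Derivation.map_aeval, derivative_rescale_exp,
    map_add, map_mul, map_sub, Polynomial.aeval_X, map_one, smul_eq_mul, map_natCast, map_neg]
  ring

theorem X_pow_add_two_dvd_of_X_pow_succ_dvd {R : Type*} [CommRing R] {k : ℕ} {D s v : R⟦X⟧}
    (hD : X ^ (k + 1) ∣ D) (hsv : X ∣ s - v) :
    X ^ (k + 2) ∣ ((k : R⟦X⟧) + 1) * s * D - X * v * d⁄dX R D := by
  obtain ⟨H, rfl⟩ := hD
  obtain ⟨w, hw⟩ := hsv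
  rw [sub_eq_iff_eq_add] at hw
  subst hw
  refine ⟨((k : R⟦X⟧) + 1) * w * H - v * d⁄dX R H, ?_⟩
  rw [Derivation.leibniz, Derivation.leibniz_pow, derivative_X, Nat.add_sub_cancel]
  simp only [smul_eq_mul, nsmul_eq_mul]
  push_cast
  ring

theorem X_pow_dvd_eulerianSeries_sub {u : ℚ⟦X⟧} (hu : X * u = 1 - rescale (-1) (exp ℚ))
    (l : ℕ) : X ^ (l + 1) ∣ eulerianSeries l - (l.factorial : ℚ⟦X⟧) * u ^ (l + 1) := by
  have hu0 : constantCoeff u = 1 := by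
    simpa [coeff_rescale_exp] using congrArg (coeff 1) hu
  have hdu : X * d⁄dX ℚ u + u = rescale (-1) (exp ℚ) := by
    simpa [derivative_rescale_exp, add_comm] using congrArg (d⁄dX ℚ) hu
  induction l with
  | zero => simp [eulerianSeries_zero, X_dvd_iff, hu0]
  | succ l ih =>
    have hrec : eulerianSeries (l + 1) - ((l + 1).factorial : ℚ⟦X⟧) * u ^ (l + 1 + 1)
        = ((l : ℚ⟦X⟧) + 1) * rescale (-1) (exp ℚ)
            * (eulerianSeries l - (l.factorial : ℚ⟦X⟧) * u ^ (l + 1))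
          - X * u * d⁄dX ℚ (eulerianSeries l - (l.factorial : ℚ⟦X⟧) * u ^ (l + 1)) := by
      simp only [eulerianSeries_succ, ← hu, map_sub, Derivation.leibniz, Derivation.leibniz_pow,
        Derivation.map_natCast, smul_eq_mul, nsmul_eq_mul, Nat.add_sub_cancel, Nat.factorial_succ]
      push_cast
      linear_combination (-((l : ℚ⟦X⟧) + 1) * l.factorial * u ^ (l + 1)) * hdu
    rw [hrec]
    refine X_pow_add_two_dvd_of_X_pow_succ_dvd ih (X_dvd_iff.mpr ?_)
    rw [map_sub, hu0, constantCoeff_rescale_exp, sub_self]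

theorem coeff_rescale_exp_mul_eulerianSeries {l n : ℕ} (hn : n ≤ l) (y : ℚ) :
    coeff n (rescale y (exp ℚ) * eulerianSeries l) = l.factorial *
      coeff (n + l + 1) (rescale y (exp ℚ) * (1 - rescale (-1) (exp ℚ)) ^ (l + 1)) := by
  obtain ⟨u, hu⟩ : X ∣ 1 - rescale (-1 : ℚ) (exp ℚ) := by
    rw [X_dvd_iff, map_sub, map_one, constantCoeff_rescale_exp, sub_self]
  have hlow := X_pow_dvd_iff.mp (dvd_mul_of_dvd_right
    (X_pow_dvd_eulerianSeries_sub hu.symm l) (rescale y (exp ℚ))) n (by omega)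
  rw [mul_sub, map_sub, sub_eq_zero] at hlow
  rw [hlow, hu, mul_pow, mul_left_comm, add_assoc, mul_left_comm _ (X ^ (l + 1)),
    coeff_X_pow_mul, ← map_natCast C, coeff_C_mul]

theorem coeff_rescale_exp_mul_eulerianSeries_eq_sum (l n : ℕ) (y : ℚ) :
    coeff n (rescale y (exp ℚ) * eulerianSeries l)
      = ∑ m ∈ range (l + 1), (aCoef l m : ℚ) * ((y - m) ^ n / n.factorial) := by
  simp only [eulerianSeries, eulerianPoly, map_sum, Polynomial.aeval_C, Polynomial.aeval_X_pow,
    mul_sum, map_mul]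
  refine sum_congr rfl fun m _ => ?_
  rw [mul_left_comm, rescale_exp_mul_pow, PowerSeries.algebraMap_apply, coeff_C_mul,
    coeff_rescale_exp]
  simp [sub_eq_add_neg]

theorem coeff_rescale_exp_mul_one_sub_pow_eq_sum (l N : ℕ) (y : ℚ) :
    coeff N (rescale y (exp ℚ) * (1 - rescale (-1) (exp ℚ)) ^ (l + 1)) = ∑ j ∈ range (l + 2),
      (-1 : ℚ) ^ j * ((l + 1).choose j : ℚ) * ((y - j) ^ N / N.factorial) := by
  rw [sub_eq_neg_add, add_pow, mul_sum, map_sum]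
  refine sum_congr rfl fun j _ => ?_
  have hterm : rescale y (exp ℚ) * ((-rescale (-1) (exp ℚ)) ^ j * 1 ^ (l + 1 - j)
      * ((l + 1).choose j : ℚ⟦X⟧)) = C ((-1 : ℚ) ^ j * (l + 1).choose j)
        * (rescale y (exp ℚ) * rescale (-1) (exp ℚ) ^ j) := by
    rw [neg_pow, one_pow, mul_one, map_mul, map_pow, map_neg, map_one, map_natCast]
    ring
  rw [hterm, coeff_C_mul, rescale_exp_mul_pow, coeff_rescale_exp]
  simp [sub_eq_add_neg, mul_assoc]

end PowerSeries

theorem sum_aCoef_mul_sub_pow {l n : ℕ} (hn : n ≤ l) (y : ℚ) :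
    (1 / ((n.factorial : ℚ) * (l.factorial : ℚ))) *
        ∑ m ∈ range (l + 1), (aCoef l m : ℚ) * (y - (m : ℚ)) ^ n =
      (1 / ((n + l + 1).factorial : ℚ)) *
        ∑ j ∈ range (l + 2),
          (-1 : ℚ) ^ j * ((l + 1).choose j : ℚ) * (y - (j : ℚ)) ^ (n + l + 1) := by
  have h := coeff_rescale_exp_mul_eulerianSeries hn y
  rw [coeff_rescale_exp_mul_eulerianSeries_eq_sum, coeff_rescale_exp_mul_one_sub_pow_eq_sum] at h
  simp only [mul_div_assoc', ← sum_div] at h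
  have := Nat.factorial_ne_zero n
  have := Nat.factorial_ne_zero l
  have := Nat.factorial_ne_zero (n + l + 1)
  field_simp at h ⊢
  linear_combination h

theorem sum_Icc_aCoef_mul_eq_sum_range {l : ℕ} (hl : 1 ≤ l) (f : ℕ → ℚ) :
    ∑ j ∈ Icc 1 l, (aCoef l j : ℚ) * f j = ∑ j ∈ range (l + 1), (aCoef l j : ℚ) * f j := by
  refine sum_subset (fun j hj => by simp at hj ⊢; omega) fun j hj hj' => ?_
  obtain rfl : j = 0 := by simp at hj hj'; omega
  obtain ⟨k, rfl⟩ : ∃ k, l = k + 1 := ⟨l - 1, by omega⟩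
  simp [aCoef]

theorem stmt4 (l i : ℕ) (hl : 1 ≤ l) (hi : 2 * i ≤ l) :
    (1 / (((2 * i).factorial : ℚ) * (l.factorial : ℚ))) *
        ∑ j ∈ Finset.Icc 1 l, (aCoef l j : ℚ) * (((l : ℚ) + 1) / 2 - (j : ℚ)) ^ (2 * i) =
      (1 / ((2 * i + l + 1).factorial : ℚ)) *
        ∑ j ∈ Finset.range (l + 2),
          (-1 : ℚ) ^ j * ((l + 1).choose j : ℚ) * (((l : ℚ) + 1) / 2 - (j : ℚ)) ^ (2 * i + l + 1) := by
  rw [sum_Icc_aCoef_mul_eq_sum_range hl (fun j => (((l : ℚ) + 1) / 2 - (j : ℚ)) ^ (2 * i))]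
  exact sum_aCoef_mul_sub_pow hi _
end

section
/- Let α ∈ (0,1), μ ∈ (−1,0), let j ≥ 1 be an integer, let t > 0, and let ψ : (0,t) → [0,∞] be measurable. Then ∫₀^t (t−s)^{α−1}·s^{μ−j}·(∫₀^s (s−w)^{j−1}·ψ(w) dw) ds ≤ B(α, (μ+1)/2)·t^{α+(μ−1)/2}·∫₀^t w^{(μ−1)/2}·ψ(w) dw, where B denotes the Euler Beta function. -/
/-!
For `0 < w < s` we have `(s - w)^{j-1} s^{μ-j} ≤ s^{μ-1} ≤ s^{(μ-1)/2} w^{(μ-1)/2}`,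
because `(μ - 1)/2 ≤ 0`. After this bound, Tonelli's theorem exchanges the order of integration,
and the remaining inner integral `∫_w^t (t-s)^{α-1} s^{(μ-1)/2} ds` is at most the full Beta
integral `∫_0^t (t-s)^{α-1} s^{(μ-1)/2} ds = B(α, (μ+1)/2) t^{α+(μ-1)/2}`.
-/

open MeasureTheory

/-- The Euler Beta function `B(x,y) = ∫₀^1 (1−s)^{x−1} s^{y−1} ds`. -/
noncomputable def betaFn (x y : ℝ) : ℝ :=
  ∫ s in (0 : ℝ)..1, (1 - s) ^ (x - 1) * s ^ (y - 1)

open Set ENNReal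

lemma intervalIntegral_sub_rpow_mul_rpow (a b : ℝ) {t : ℝ} (ht : 0 < t) :
    ∫ s in (0 : ℝ)..t, (t - s) ^ (a - 1) * s ^ (b - 1) = betaFn a b * t ^ (a + b - 1) := by
  have hscale : ∀ u ∈ uIcc (0 : ℝ) 1, (t - t * u) ^ (a - 1) * (t * u) ^ (b - 1) =
      t ^ (a - 1) * t ^ (b - 1) * ((1 - u) ^ (a - 1) * u ^ (b - 1)) := by
    intro u hu
    rw [uIcc_of_le zero_le_one] at hu
    rw [show t - t * u = t * (1 - u) by ring, Real.mul_rpow ht.le (by linarith [hu.2]),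
      Real.mul_rpow ht.le hu.1]
    ring
  have hpow : t * (t ^ (a - 1) * t ^ (b - 1)) = t ^ (a + b - 1) := by
    rw [show a + b - 1 = 1 + ((a - 1) + (b - 1)) by ring, Real.rpow_add ht, Real.rpow_add ht,
      Real.rpow_one]
  calc ∫ s in (0 : ℝ)..t, (t - s) ^ (a - 1) * s ^ (b - 1)
      = t • ∫ u in (0 : ℝ)..1, (t - t * u) ^ (a - 1) * (t * u) ^ (b - 1) := by
        rw [intervalIntegral.smul_integral_comp_mul_left
          (fun s => (t - s) ^ (a - 1) * s ^ (b - 1)) t, mul_zero, mul_one]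
    _ = betaFn a b * t ^ (a + b - 1) := by
        rw [intervalIntegral.integral_congr hscale, intervalIntegral.integral_const_mul,
          smul_eq_mul, ← mul_assoc, hpow, betaFn, mul_comm]

lemma intervalIntegrable_sub_rpow_mul_rpow {a b t : ℝ} (ha : 0 < a) (hb : 0 < b) (ht : 0 < t) :
    IntervalIntegrable (fun s => (t - s) ^ (a - 1) * s ^ (b - 1)) volume 0 t := by
  have hleft : IntervalIntegrable (fun s => (t - s) ^ (a - 1) * s ^ (b - 1)) volume 0 (t / 2) := by
    refine (intervalIntegral.intervalIntegrable_rpow' (by linarith)).continuousOn_mul ?_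
    refine ((continuousOn_const.sub continuousOn_id).rpow_const fun s hs => ?_)
    rw [uIcc_of_le (by linarith)] at hs
    exact Or.inl (show (0 : ℝ) < t - s by linarith [hs.2]).ne'
  have hright : IntervalIntegrable (fun s => (t - s) ^ (a - 1) * s ^ (b - 1)) volume (t / 2) t := by
    have hsub : IntervalIntegrable (fun s => (t - s) ^ (a - 1)) volume (t / 2) t := by
      simpa [show t - t / 2 = t / 2 by ring] using
        ((intervalIntegral.intervalIntegrable_rpow' (a := 0) (b := t / 2)
          (show -1 < a - 1 by linarith)).comp_sub_left t).symm
    refine hsub.mul_continuousOn (continuousOn_id.rpow_const fun s hs => ?_)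
    rw [uIcc_of_le (by linarith)] at hs
    exact Or.inl (show (0 : ℝ) < s by linarith [hs.1]).ne'
  exact hleft.trans hright

lemma setLIntegral_sub_rpow_mul_rpow {a b t : ℝ} (ha : 0 < a) (hb : 0 < b) (ht : 0 < t) :
    ∫⁻ s in Ioo 0 t, ENNReal.ofReal ((t - s) ^ (a - 1) * s ^ (b - 1)) =
      ENNReal.ofReal (betaFn a b * t ^ (a + b - 1)) := by
  have hint := (intervalIntegrable_iff_integrableOn_Ioo_of_le ht.le).1
    (intervalIntegrable_sub_rpow_mul_rpow ha hb ht)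
  rw [← ofReal_integral_eq_lintegral_ofReal hint, ← integral_Ioc_eq_integral_Ioo,
    ← intervalIntegral.integral_of_le ht.le, intervalIntegral_sub_rpow_mul_rpow a b ht]
  exact (ae_restrict_iff' measurableSet_Ioo).2 <| ae_of_all _ fun s hs =>
    mul_nonneg (Real.rpow_nonneg (by linarith [hs.2]) _) (Real.rpow_nonneg hs.1.le _)

lemma setLIntegral_Ioo_mul_setLIntegral_Ioo_swap {f g : ℝ → ℝ≥0∞} (hf : Measurable f)
    (hg : Measurable g) (a b : ℝ) :
    ∫⁻ s in Ioo a b, f s * ∫⁻ w in Ioo a s, g w =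
      ∫⁻ w in Ioo a b, g w * ∫⁻ s in Ioo w b, f s := by
  set K : ℝ → ℝ → ℝ≥0∞ := fun s w => if w < s then f s * g w else 0
  have hK : Measurable (Function.uncurry K) :=
    Measurable.ite (measurableSet_lt measurable_snd measurable_fst)
      ((hf.comp measurable_fst).mul (hg.comp measurable_snd)) measurable_const
  have hinner : ∀ s ∈ Ioo a b, f s * ∫⁻ w in Ioo a s, g w = ∫⁻ w in Ioo a b, K s w := by
    intro s hs
    have hKs : K s = (Iio s).indicator fun w => f s * g w := by
      ext w; simp [K, indicator_apply]
    rw [hKs, lintegral_indicator measurableSet_Iio, Measure.restrict_restrict measurableSet_Iio,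
      Iio_inter_Ioo, min_eq_left hs.2.le, lintegral_const_mul _ hg]
  have houter : ∀ w ∈ Ioo a b, g w * ∫⁻ s in Ioo w b, f s = ∫⁻ s in Ioo a b, K s w := by
    intro w hw
    have hKw : (K · w) = (Ioi w).indicator fun s => g w * f s := by
      ext s; simp [K, indicator_apply, mul_comm]
    rw [hKw, lintegral_indicator measurableSet_Ioi, Measure.restrict_restrict measurableSet_Ioi,
      Ioi_inter_Ioo, max_eq_left hw.1.le, lintegral_const_mul _ hf]
  rw [setLIntegral_congr_fun measurableSet_Ioo hinner,
    setLIntegral_congr_fun measurableSet_Ioo houter]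
  exact lintegral_lintegral_swap hK.aemeasurable

lemma rpow_sub_natCast_mul_sub_pow_le {μ s w : ℝ} (hμ : μ ≤ 1) {j : ℕ} (hj : 1 ≤ j)
    (hw : 0 < w) (hws : w ≤ s) :
    s ^ (μ - j) * (s - w) ^ (j - 1) ≤ s ^ ((μ - 1) / 2) * w ^ ((μ - 1) / 2) := by
  have hs : 0 < s := hw.trans_le hws
  calc s ^ (μ - j) * (s - w) ^ (j - 1)
      ≤ s ^ (μ - j) * s ^ (j - 1) := by
        gcongr
        linarith
    _ = s ^ ((μ - 1) / 2) * s ^ ((μ - 1) / 2) := by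
        rw [← Real.rpow_natCast, Nat.cast_sub hj, Nat.cast_one, ← Real.rpow_add hs,
          ← Real.rpow_add hs]
        ring_nf
    _ ≤ s ^ ((μ - 1) / 2) * w ^ ((μ - 1) / 2) := by
        gcongr s ^ _ * ?_
        exact Real.rpow_le_rpow_of_nonpos hw hws (by linarith)

lemma ofReal_rpow_mul_setLIntegral_le {μ s : ℝ} (hμ : μ ≤ 1) {j : ℕ} (hj : 1 ≤ j)
    (ψ : ℝ → ℝ≥0∞) :
    ENNReal.ofReal (s ^ (μ - j)) * ∫⁻ w in Ioo 0 s, ENNReal.ofReal ((s - w) ^ (j - 1)) * ψ w ≤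
      ENNReal.ofReal (s ^ ((μ - 1) / 2)) *
        ∫⁻ w in Ioo 0 s, ENNReal.ofReal (w ^ ((μ - 1) / 2)) * ψ w := by
  rw [← lintegral_const_mul' _ _ ofReal_ne_top, ← lintegral_const_mul' _ _ ofReal_ne_top]
  refine setLIntegral_mono' measurableSet_Ioo fun w hw => ?_
  have hs : 0 ≤ s := hw.1.le.trans hw.2.le
  rw [← mul_assoc, ← mul_assoc, ← ENNReal.ofReal_mul (Real.rpow_nonneg hs _),
    ← ENNReal.ofReal_mul (Real.rpow_nonneg hs _)]
  gcongr ENNReal.ofReal ?_ * _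
  exact rpow_sub_natCast_mul_sub_pow_le hμ hj hw.1 hw.2.le

theorem stmt16 (α μ : ℝ) (hα : α ∈ Set.Ioo (0 : ℝ) 1) (hμ : μ ∈ Set.Ioo (-1 : ℝ) 0)
    (j : ℕ) (hj : 1 ≤ j) (t : ℝ) (ht : 0 < t) (ψ : ℝ → ENNReal) (hψ : Measurable ψ) :
    (∫⁻ s in Set.Ioo (0 : ℝ) t,
        ENNReal.ofReal ((t - s) ^ (α - 1) * s ^ (μ - j)) *
          ∫⁻ w in Set.Ioo (0 : ℝ) s, ENNReal.ofReal ((s - w) ^ (j - 1)) * ψ w) ≤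
      ENNReal.ofReal (betaFn α ((μ + 1) / 2) * t ^ (α + (μ - 1) / 2)) *
        ∫⁻ w in Set.Ioo (0 : ℝ) t, ENNReal.ofReal (w ^ ((μ - 1) / 2)) * ψ w := by
  set F : ℝ → ℝ≥0∞ := fun s => ENNReal.ofReal ((t - s) ^ (α - 1) * s ^ ((μ - 1) / 2))
  set G : ℝ → ℝ≥0∞ := fun w => ENNReal.ofReal (w ^ ((μ - 1) / 2)) * ψ w
  set C := ENNReal.ofReal (betaFn α ((μ + 1) / 2) * t ^ (α + (μ - 1) / 2))
  have hG : Measurable G := by fun_prop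
  have hF : ∫⁻ s in Ioo 0 t, F s = C := by
    have := setLIntegral_sub_rpow_mul_rpow hα.1 (show 0 < (μ + 1) / 2 by linarith [hμ.1]) ht
    rwa [show (μ + 1) / 2 - 1 = (μ - 1) / 2 by ring,
      show α + (μ + 1) / 2 - 1 = α + (μ - 1) / 2 by ring] at this
  calc _ ≤ ∫⁻ s in Ioo 0 t, F s * ∫⁻ w in Ioo 0 s, G w := by
        refine setLIntegral_mono' measurableSet_Ioo fun s hs => ?_
        have hts : 0 ≤ (t - s) ^ (α - 1) := Real.rpow_nonneg (by linarith [hs.2]) _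
        simp only [F, ENNReal.ofReal_mul hts, mul_assoc]
        gcongr _ * ?_
        exact ofReal_rpow_mul_setLIntegral_le (by linarith [hμ.2]) hj ψ
    _ = ∫⁻ w in Ioo 0 t, G w * ∫⁻ s in Ioo w t, F s :=
        setLIntegral_Ioo_mul_setLIntegral_Ioo_swap (by fun_prop) hG 0 t
    _ ≤ ∫⁻ w in Ioo 0 t, G w * C := by
        refine setLIntegral_mono' measurableSet_Ioo fun w hw => ?_
        rw [← hF]
        gcongr
        exact hw.1.le
    _ = C * ∫⁻ w in Ioo 0 t, G w := by rw [lintegral_mul_const _ hG, mul_comm]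
end
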